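/- arXiv:2508.01238 — 2 statements merged into one kernel-verified Lean document; each statement's English description precedes it below -/
import Mathlib

section
/- Surjectivity of div in the polynomial conformal elasticity complex: let k ≥ 1 be an integer. For every vector field p ∈ P_{k−1}(ℝ³) (polynomial components of total degree at most k−1) there exists τ ∈ P_k(S∩T) (entries polynomial of total degree at most k, values symmetric and traceless) such that div τ = p identically on ℝ³. -/
noncomputable section

open Matrix

/-- Vectors in ℝ³. -/
abbrev V3 := Fin 3 → ℝ
/-- 3×3 real matrices. -/
abbrev M3 := Matrix (Fin 3) (Fin 3) ℝ

/-- Partial derivative ∂ᵢ of a scalar field. -/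
def pd (i : Fin 3) (f : V3 → ℝ) : V3 → ℝ :=
  fun x => fderiv ℝ f x (Pi.single i 1)

/-- Gradient matrix of a vector field: (grad v)_{ij} = ∂ⱼ vᵢ. -/
def vgrad (v : V3 → V3) : V3 → M3 :=
  fun x => Matrix.of fun i j => pd j (fun y => v y i) x

/-- Divergence of a vector field. -/
def vdiv (v : V3 → V3) : V3 → ℝ :=
  fun x => ∑ i, pd i (fun y => v y i) x

/-- Cross product on ℝ³. -/
def cross (a b : V3) : V3 :=
  fun i => a (i + 1) * b (i + 2) - a (i + 2) * b (i + 1)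

/-- Curl of a vector field. -/
def vcurl (v : V3 → V3) : V3 → V3 :=
  fun x i => pd (i + 1) (fun y => v y (i + 2)) x - pd (i + 2) (fun y => v y (i + 1)) x

/-- Row-wise curl of a matrix field. -/
def mcurl (τ : V3 → M3) : V3 → M3 :=
  fun x => Matrix.of fun i j =>
    pd (j + 1) (fun y => τ y i (j + 2)) x - pd (j + 2) (fun y => τ y i (j + 1)) x

/-- Row-wise divergence of a matrix field. -/
def mdiv (τ : V3 → M3) : V3 → V3 :=
  fun x i => ∑ j, pd j (fun y => τ y i j) x

/-- Symmetric part of a matrix. -/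
def msym (A : M3) : M3 := (1 / 2 : ℝ) • (A + Aᵀ)

/-- Deviatoric (trace-free) part of a matrix. -/
def devm (A : M3) : M3 := A - ((1 / 3 : ℝ) * A.trace) • (1 : M3)

/-- The skew-symmetric matrix associated to a vector: mskw(ω) y = ω × y. -/
def mskw (w : V3) : M3 := !![0, -w 2, w 1; w 2, 0, -w 0; -w 1, w 0, 0]

/-- vskw(A) := mskw⁻¹(skw A). -/
def vskw (A : M3) : V3 :=
  (1 / 2 : ℝ) • ![A 2 1 - A 1 2, A 0 2 - A 2 0, A 1 0 - A 0 1]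

/-- S⁻¹(A) := Aᵀ − (1/2)(tr A)I. -/
def Sinv (A : M3) : M3 := Aᵀ - ((1 / 2 : ℝ) * A.trace) • (1 : M3)

/-- S(A) := Aᵀ − (tr A)I. -/
def Sop (A : M3) : M3 := Aᵀ - A.trace • (1 : M3)

/-- Incompatibility operator inc τ := curl (S⁻¹ (curl τ)). -/
def inc (τ : V3 → M3) : V3 → M3 := mcurl fun x => Sinv (mcurl τ x)

/-- Linearized Cotton–York operator cott τ := curl (S⁻¹ (inc τ)). -/
def cott (τ : V3 → M3) : V3 → M3 := mcurl fun x => Sinv (inc τ x)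

/-- Hessian matrix of a scalar field. -/
def hess (u : V3 → ℝ) : V3 → M3 :=
  fun x => Matrix.of fun i j => pd i (pd j u) x

/-- Euclidean dot product on ℝ³. -/
def dotp (a b : V3) : ℝ := ∑ i, a i * b i

/-- Smoothness of a vector field (componentwise C^∞). -/
def SmoothV (v : V3 → V3) : Prop := ∀ i, ContDiff ℝ (⊤ : ℕ∞) fun x => v x i

/-- Smoothness of a matrix field (entrywise C^∞). -/
def SmoothM (τ : V3 → M3) : Prop := ∀ i j, ContDiff ℝ (⊤ : ℕ∞) fun x => τ x i j

/-- Conformal Killing fields. -/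
def CK (v : V3 → V3) : Prop :=
  ∃ (a c d : V3) (b : ℝ), ∀ x,
    v x = dotp x x • a - (2 * dotp a x) • x + b • x + cross c x + d

/-- Rigid motions. -/
def RM (v : V3 → V3) : Prop := ∃ a b : V3, ∀ x, v x = cross a x + b

/-- Lowest-order Raviart–Thomas fields. -/
def RT (v : V3 → V3) : Prop := ∃ (a : V3) (b : ℝ), ∀ x, v x = a + b • x

/-- Polynomial scalar functions of total degree at most k. -/
def PolyLe (k : ℕ) (f : V3 → ℝ) : Prop :=
  ∃ p : MvPolynomial (Fin 3) ℝ, p.totalDegree ≤ k ∧ ∀ x, f x = MvPolynomial.eval x p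

/-- Matrix fields with entries in P_k and values symmetric traceless. -/
def PolyLeST (k : ℕ) (τ : V3 → M3) : Prop :=
  (∀ i j, PolyLe k fun x => τ x i j) ∧ (∀ x, (τ x)ᵀ = τ x) ∧ ∀ x, (τ x).trace = 0



section PolyDivAux
open MvPolynomial

abbrev P3 := MvPolynomial (Fin 3) ℝ


lemma my_pderiv_comm (i j : Fin 3) (f : P3) :
    pderiv i (pderiv j f) = pderiv j (pderiv i f) := by
  induction f using MvPolynomial.induction_on' with
  | monomial s a =>
    rcases eq_or_ne i j with rfl | hij
    · rfl
    · simp only [pderiv_monomial]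
      rw [tsub_tsub, tsub_tsub, add_comm (Finsupp.single j 1), Finsupp.tsub_apply,
        Finsupp.tsub_apply, Finsupp.single_eq_of_ne hij, Finsupp.single_eq_of_ne (Ne.symm hij)]
      congr 1
      push_cast [Nat.sub_zero]
      ring
  | add p q hp hq => simp [map_add, hp, hq]

lemma my_totalDegree_pderiv_le (i : Fin 3) (f : P3) (d : ℕ) (hf : f.totalDegree ≤ d + 1) :
    (pderiv i f).totalDegree ≤ d := by
  conv_lhs => rw [f.as_sum]
  rw [map_sum]
  refine totalDegree_finsetSum_le ?_
  intro s hs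
  rw [pderiv_monomial]
  rcases Nat.eq_zero_or_pos (s i) with h0 | hpos
  · simp [h0]
  · refine (totalDegree_monomial_le _ _).trans ?_
    have hle : Finsupp.single i 1 ≤ s := by
      intro l
      rcases eq_or_ne l i with rfl | h
      · simp [Finsupp.single_apply]; omega
      · simp [Finsupp.single_apply, Ne.symm h]
    have hsum : (s - Finsupp.single i 1).sum (fun _ n => n) + 1 = s.sum fun _ n => n := by
      have := Finsupp.sum_add_index' (f := (s - Finsupp.single i 1)) (g := Finsupp.single i 1)
        (h := fun (_ : Fin 3) (n : ℕ) => n) (fun _ => rfl) (fun _ _ _ => rfl)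
      rw [tsub_add_cancel_of_le hle] at this
      simp [this]
    show (s - Finsupp.single i 1).sum (fun _ n => n) ≤ d
    have hdeg : s.sum (fun _ n => n) ≤ d + 1 := le_trans (le_totalDegree hs) hf
    omega


noncomputable def lap (f : P3) : P3 := ∑ i, pderiv i (pderiv i f)

lemma lap_add (f g : P3) : lap (f + g) = lap f + lap g := by
  simp [lap, map_add, Finset.sum_add_distrib]

lemma lap_sub (f g : P3) : lap (f - g) = lap f - lap g := by
  simp [lap, map_sub, Finset.sum_sub_distrib]

lemma lap_smul (c : ℝ) (f : P3) : lap (c • f) = c • lap f := by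
  simp [lap, _root_.map_smul, Finset.smul_sum]

lemma lap_zero : lap (0 : P3) = 0 := by simp [lap]

lemma lap_solve_monomial (n : ℕ) : ∀ (s : Fin 3 →₀ ℕ), s 1 + s 2 ≤ n →
    ∃ u : P3, u.totalDegree ≤ (s 0 + s 1 + s 2) + 2 ∧ lap u = monomial s 1 := by
  induction n using Nat.strong_induction_on with
  | _ n IH =>
  intro s hs
  set a := s 0 with ha
  set b := s 1 with hb
  set c := s 2 with hc
  set D : ℝ := (((a+1) * (a+2) : ℕ) : ℝ) with hD
  have hDne : D ≠ 0 := by positivity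
  set t0 : Fin 3 →₀ ℕ := s + Finsupp.single 0 2 with ht0
  set u0 : P3 := monomial t0 (1/D) with hu0
  have ht00 : t0 0 = a + 2 := by simp [ht0, ha]
  have ht0j : ∀ j : Fin 3, j ≠ 0 → t0 j = s j := by
    intro j hj
    simp [ht0, Finsupp.single_apply, Ne.symm hj]
  -- pderiv 0 twice recovers the monomial
  have h00 : pderiv 0 (pderiv 0 u0) = monomial s 1 := by
    rw [hu0, pderiv_monomial, pderiv_monomial]
    have e1 : t0 - Finsupp.single (0 : Fin 3) 1 = s + Finsupp.single 0 1 := by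
      rw [ht0]; ext l; simp [Finsupp.single_apply]; split <;> omega
    have e2 : s + Finsupp.single (0 : Fin 3) 1 - Finsupp.single (0 : Fin 3) 1 = s := by
      ext l; simp [Finsupp.single_apply]
    rw [e1, e2]
    have v2 : ((s + Finsupp.single 0 1 : Fin 3 →₀ ℕ)) 0 = a + 1 := by simp [ha]
    rw [ht00, v2]
    congr 1
    rw [hD]
    push_cast
    field_simp
  -- residuals
  have key : ∀ i : Fin 3, i ≠ 0 → ∃ v : P3, v.totalDegree ≤ (a + b + c) + 2 ∧
      lap v = pderiv i (pderiv i u0) := by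
    intro i hi
    have i12 : i = 1 ∨ i = 2 := by
      rcases i with ⟨iv, hiv⟩
      interval_cases iv
      · exact absurd rfl hi
      · left; rfl
      · right; rfl
    have hsi0 : t0 i = s i := ht0j i hi
    by_cases hbig : 2 ≤ s i
    · set t : Fin 3 →₀ ℕ := t0 - Finsupp.single i 2 with ht
      have hf0 : t 0 = a + 2 := by
        rw [ht, Finsupp.tsub_apply, ht00, Finsupp.single_apply]
        rcases i12 with rfl | rfl <;> simp
      have hf12 : t 1 + t 2 + 2 = b + c := by
        rcases i12 with rfl | rfl <;>
        · rw [ht]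
          simp only [Finsupp.tsub_apply, Finsupp.single_apply]
          rw [ht0j 1 (by decide), ht0j 2 (by decide)]
          simp only [← hb, ← hc]
          rcases (by omega : b + 2 ≤ b + c ∨ c + 2 ≤ b + c) <;> simp <;> omega
      have hbc2 : 2 ≤ b + c := by rcases i12 with rfl | rfl <;> omega
      have hmeas : t 1 + t 2 < n := by omega
      obtain ⟨w, hwdeg, hwlap⟩ := IH (t 1 + t 2) hmeas t le_rfl
      set C : ℝ := (((s i) * (s i - 1) : ℕ) : ℝ) / D with hC
      refine ⟨C • w, ?_, ?_⟩
      · refine (totalDegree_smul_le _ _).trans (hwdeg.trans ?_)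
        omega
      · rw [lap_smul, hwlap]
        rw [hu0, pderiv_monomial, pderiv_monomial]
        have e1 : t0 - Finsupp.single i 1 - Finsupp.single i 1 = t := by
          rw [ht, tsub_tsub]
          congr 1
          ext l; simp [Finsupp.single_apply]; split <;> omega
        have e2 : ((t0 - Finsupp.single i 1 : Fin 3 →₀ ℕ)) i = s i - 1 := by
          rw [Finsupp.tsub_apply, hsi0, Finsupp.single_apply]; simp
        rw [e1, e2, hsi0, smul_monomial, hC]
        congr 1
        push_cast [Nat.cast_sub (by omega : 1 ≤ s i)]
        field_simp
        simp only [smul_eq_mul, mul_one]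
        field_simp
    · -- s i ≤ 1 : residual vanishes
      refine ⟨0, by simp, ?_⟩
      rw [lap_zero, hu0, pderiv_monomial, pderiv_monomial]
      have e2 : ((t0 - Finsupp.single i 1 : Fin 3 →₀ ℕ)) i = s i - 1 := by
        rw [Finsupp.tsub_apply, hsi0, Finsupp.single_apply]; simp
      rw [e2, hsi0]
      have : (1/D * ↑(s i) * ↑(s i - 1)) = 0 := by
        rcases (by omega : s i = 0 ∨ s i = 1) with h | h <;> simp [h]
      rw [this, monomial_zero]
  obtain ⟨v1, hv1deg, hv1lap⟩ := key 1 (by decide)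
  obtain ⟨v2, hv2deg, hv2lap⟩ := key 2 (by decide)
  refine ⟨u0 - v1 - v2, ?_, ?_⟩
  · have hdu0 : u0.totalDegree ≤ a + b + c + 2 := by
      refine (totalDegree_monomial_le _ _).trans ?_
      rw [ht0]
      have := Finsupp.sum_add_index' (f := s) (g := Finsupp.single (0:Fin 3) 2)
        (h := fun (_ : Fin 3) (n : ℕ) => n) (fun _ => rfl) (fun _ _ _ => rfl)
      show ((s + Finsupp.single (0:Fin 3) 2).sum fun _ n => n) ≤ a + b + c + 2
      rw [this, Finsupp.sum_fintype _ _ (fun _ => rfl), Fin.sum_univ_three,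
        Finsupp.sum_single_index rfl]
    calc (u0 - v1 - v2).totalDegree ≤ max (u0 - v1).totalDegree v2.totalDegree := by
          rw [sub_eq_add_neg (u0 - v1)]
          exact (totalDegree_add _ _).trans (by rw [totalDegree_neg])
      _ ≤ max (max u0.totalDegree v1.totalDegree) v2.totalDegree := by
          refine max_le_max ?_ le_rfl
          rw [sub_eq_add_neg]
          exact (totalDegree_add _ _).trans (by rw [totalDegree_neg])
      _ ≤ a + b + c + 2 := by
          simp only [max_le_iff]
          exact ⟨⟨hdu0, hv1deg⟩, hv2deg⟩
  · rw [lap_sub, lap_sub, hv1lap, hv2lap]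
    have : lap u0 = pderiv 0 (pderiv 0 u0) + pderiv 1 (pderiv 1 u0) + pderiv 2 (pderiv 2 u0) := by
      rw [lap, Fin.sum_univ_three]
    rw [this, h00]
    ring

-- sum of a Finsupp over Fin 3
lemma fsum_eq (s : Fin 3 →₀ ℕ) : (s.sum fun _ k => k) = s 0 + s 1 + s 2 := by
  rw [Finsupp.sum_fintype _ _ (fun _ => rfl), Fin.sum_univ_three]

lemma lap_sum {α : Type*} (S : Finset α) (f : α → P3) :
    lap (∑ x ∈ S, f x) = ∑ x ∈ S, lap (f x) := by
  simp only [lap, map_sum]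
  rw [Finset.sum_comm]

lemma lap_solve (d : ℕ) (q : P3) (hq : q.totalDegree ≤ d) :
    ∃ u : P3, u.totalDegree ≤ d + 2 ∧ lap u = q := by
  choose F hFdeg hFlap using fun s : Fin 3 →₀ ℕ => lap_solve_monomial (s 1 + s 2) s le_rfl
  refine ⟨∑ s ∈ q.support, coeff s q • F s, ?_, ?_⟩
  · refine totalDegree_finsetSum_le ?_
    intro s hs
    refine (totalDegree_smul_le _ _).trans ((hFdeg s).trans ?_)
    have h1 := le_totalDegree hs
    rw [fsum_eq] at h1
    omega
  · rw [lap_sum]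
    conv_rhs => rw [q.as_sum]
    refine Finset.sum_congr rfl fun s _ => ?_
    rw [lap_smul, hFlap, smul_monomial, smul_eq_mul, mul_one]



lemma hasFDerivAt_eval (f : P3) (x : V3) :
    HasFDerivAt (fun y : V3 => eval y f)
      (∑ j, eval x (pderiv j f) • ContinuousLinearMap.proj (R := ℝ) (φ := fun _ : Fin 3 => ℝ) j)
      x := by
  induction f using MvPolynomial.induction_on with
  | C a =>
    simp only [eval_C, pderiv_C, map_zero, zero_smul, Finset.sum_const_zero]
    exact hasFDerivAt_const a x
  | add p q hp hq =>
    have := hp.add hq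
    simp only [eval_add, map_add] at this ⊢
    refine this.congr_fderiv ?_
    symm
    rw [← Finset.sum_add_distrib]
    congr 1
    ext j
    rw [add_smul]
  | mul_X p n hp =>
    have hX : HasFDerivAt (fun y : V3 => y n)
        (ContinuousLinearMap.proj (R := ℝ) (φ := fun _ : Fin 3 => ℝ) n) x :=
      hasFDerivAt_apply n x
    have := hp.mul hX
    simp only [eval_mul, eval_X]
    refine this.congr_fderiv ?_
    symm
    have hpd : ∀ j : Fin 3, pderiv j (p * X n) = pderiv j p * X n
        + p * (if n = j then 1 else 0) := by
      intro j
      rw [pderiv_mul]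
      congr 2
      rcases eq_or_ne n j with rfl | h
      · simp
      · simp [pderiv_X_of_ne (Ne.symm h), h]
    simp only [hpd, map_add, eval_mul, eval_X, add_smul]
    rw [Finset.sum_add_distrib, add_comm]
    congr 1
    · rw [Finset.sum_congr rfl (fun j _ => by
        rw [show eval x (if n = j then (1:P3) else 0) = if n = j then (1:ℝ) else 0 by
          split <;> simp]),
        ]
      simp only [mul_ite, mul_one, mul_zero, ite_smul, zero_smul]
      rw [Finset.sum_ite_eq]
      simp
    · rw [Finset.smul_sum]
      congr 1
      ext j
      rw [smul_smul, mul_comm (x n)]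

lemma pd_eval (i : Fin 3) (f : P3) (x : V3) :
    pd i (fun y => eval y f) x = eval x (pderiv i f) := by
  show fderiv ℝ (fun y => eval y f) x (Pi.single i 1) = _
  rw [(hasFDerivAt_eval f x).fderiv]
  simp only [ContinuousLinearMap.coe_sum', Finset.sum_apply, ContinuousLinearMap.coe_smul',
    Pi.smul_apply, ContinuousLinearMap.proj_apply, Pi.single_apply, smul_eq_mul, mul_ite,
    mul_one, mul_zero]
  rw [Finset.sum_ite_eq']
  simp

lemma lap_pderiv (i : Fin 3) (f : P3) : lap (pderiv i f) = pderiv i (lap f) := by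
  rw [lap, lap, map_sum]
  refine Finset.sum_congr rfl fun j _ => ?_
  rw [my_pderiv_comm j i f, my_pderiv_comm j i (pderiv j f)]

end PolyDivAux

/-- surjectivity of div in the polynomial conformal elasticity complex. -/
theorem poly_div_surjective (k : ℕ) (hk : 1 ≤ k) (p : V3 → V3)
    (hp : ∀ i, PolyLe (k - 1) fun x => p x i) :
    ∃ τ : V3 → M3, PolyLeST k τ ∧ ∀ x, mdiv τ x = p x := by
  classical
  choose P hPdeg hPval using hp
  have hW : ∀ i : Fin 3, ∃ w : P3, w.totalDegree ≤ k + 1 ∧ lap w = (2:ℝ) • P i := by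
    intro i
    obtain ⟨w, hdeg, hlap⟩ := lap_solve (k-1) ((2:ℝ) • P i)
      ((MvPolynomial.totalDegree_smul_le _ _).trans (hPdeg i))
    exact ⟨w, by omega, hlap⟩
  choose W hWdeg hWlap using hW
  set S : P3 := ∑ l, MvPolynomial.pderiv l (W l) with hS
  have hSdeg : S.totalDegree ≤ k := MvPolynomial.totalDegree_finsetSum_le fun l _ =>
    my_totalDegree_pderiv_le l (W l) k (hWdeg l)
  obtain ⟨Φ, hΦdeg, hΦlap⟩ := lap_solve k ((-(1/4) : ℝ) • S)
    ((MvPolynomial.totalDegree_smul_le _ _).trans hSdeg)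
  set V : Fin 3 → P3 := fun i => W i + MvPolynomial.pderiv i Φ with hV
  have hVdeg : ∀ i, (V i).totalDegree ≤ k + 1 := fun i =>
    (MvPolynomial.totalDegree_add _ _).trans
      (max_le (hWdeg i) (my_totalDegree_pderiv_le i Φ (k+1) hΦdeg))
  set SV : P3 := ∑ l, MvPolynomial.pderiv l (V l) with hSV
  have hSVdeg : SV.totalDegree ≤ k := MvPolynomial.totalDegree_finsetSum_le fun l _ =>
    my_totalDegree_pderiv_le l (V l) k (hVdeg l)
  set T : Fin 3 → Fin 3 → P3 := fun i j =>
    (1/2 : ℝ) • (MvPolynomial.pderiv j (V i) + MvPolynomial.pderiv i (V j))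
      - (if i = j then (1/3 : ℝ) • SV else 0) with hT
  have hpdV : ∀ i j, (MvPolynomial.pderiv j (V i)).totalDegree ≤ k := fun i j =>
    my_totalDegree_pderiv_le j (V i) k (hVdeg i)
  have hTdeg : ∀ i j, (T i j).totalDegree ≤ k := by
    intro i j
    have hTij : T i j = (1/2 : ℝ) • (MvPolynomial.pderiv j (V i) + MvPolynomial.pderiv i (V j))
      - (if i = j then (1/3 : ℝ) • SV else 0) := rfl
    rw [hTij, sub_eq_add_neg]
    refine (MvPolynomial.totalDegree_add _ _).trans (max_le ?_ ?_)
    · refine (MvPolynomial.totalDegree_smul_le _ _).trans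
        ((MvPolynomial.totalDegree_add _ _).trans (max_le (hpdV i j) (hpdV j i)))
    · rw [MvPolynomial.totalDegree_neg]
      split
      · exact (MvPolynomial.totalDegree_smul_le _ _).trans hSVdeg
      · simp
  have hTsymm : ∀ i j, T i j = T j i := by
    intro i j
    rcases eq_or_ne i j with rfl | hij
    · rfl
    · simp only [hT, hij, Ne.symm hij, if_false]
      rw [add_comm]
  have hTtrace : (∑ i, T i i) = 0 := by
    simp only [hT, if_true, Fin.sum_univ_three]
    rw [hSV, Fin.sum_univ_three]
    module
  have hSVeq : SV = S + (-(1/4) : ℝ) • S := by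
    have h1 : SV = S + lap Φ := by
      rw [hSV, hS, lap, ← Finset.sum_add_distrib]
      exact Finset.sum_congr rfl fun l _ => map_add _ _ _
    rw [h1, hΦlap]
  have hlapV : ∀ i, lap (V i) = (2:ℝ) • P i + (-(1/4) : ℝ) • MvPolynomial.pderiv i S := by
    intro i
    show lap (W i + MvPolynomial.pderiv i Φ) = _
    rw [lap_add, hWlap, lap_pderiv, hΦlap, Derivation.map_smul]
  have hdivT : ∀ i, (∑ j, MvPolynomial.pderiv j (T i j)) = P i := by
    intro i
    have hBsum : (∑ j, MvPolynomial.pderiv j (if i = j then (1/3:ℝ) • SV else 0))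
        = MvPolynomial.pderiv i ((1/3:ℝ) • SV) := by
      rw [Finset.sum_congr rfl (fun j _ => by
        rw [apply_ite (MvPolynomial.pderiv j), map_zero])]
      rw [Finset.sum_ite_eq]
      simp
    have hAsum : (∑ j, MvPolynomial.pderiv j
          ((1/2 : ℝ) • (MvPolynomial.pderiv j (V i) + MvPolynomial.pderiv i (V j))))
        = (1/2:ℝ) • lap (V i) + (1/2:ℝ) • MvPolynomial.pderiv i SV := by
      have : ∀ j : Fin 3, MvPolynomial.pderiv j
            ((1/2 : ℝ) • (MvPolynomial.pderiv j (V i) + MvPolynomial.pderiv i (V j)))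
          = (1/2:ℝ) • (MvPolynomial.pderiv j (MvPolynomial.pderiv j (V i)))
            + (1/2:ℝ) • (MvPolynomial.pderiv i (MvPolynomial.pderiv j (V j))) := by
        intro j
        rw [Derivation.map_smul, map_add, smul_add, my_pderiv_comm j i (V j)]
      rw [Finset.sum_congr rfl fun j _ => this j, Finset.sum_add_distrib,
        ← Finset.smul_sum, ← Finset.smul_sum, ← map_sum (MvPolynomial.pderiv i), ← hSV]
      rw [lap]
    have expand : (∑ j, MvPolynomial.pderiv j (T i j))
        = (∑ j, MvPolynomial.pderiv j
            ((1/2 : ℝ) • (MvPolynomial.pderiv j (V i) + MvPolynomial.pderiv i (V j))))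
          - ∑ j, MvPolynomial.pderiv j (if i = j then (1/3:ℝ) • SV else 0) := by
      rw [← Finset.sum_sub_distrib]
      exact Finset.sum_congr rfl fun j _ => map_sub _ _ _
    rw [expand, hAsum, hBsum, hlapV i, Derivation.map_smul,
      show MvPolynomial.pderiv i SV
        = MvPolynomial.pderiv i S + (-(1/4):ℝ) • MvPolynomial.pderiv i S by
        rw [hSVeq, map_add, Derivation.map_smul]]
    module
  refine ⟨fun x => Matrix.of fun i j => MvPolynomial.eval x (T i j), ⟨?_, ?_, ?_⟩, ?_⟩
  · exact fun i j => ⟨T i j, hTdeg i j, fun x => rfl⟩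
  · intro x
    ext i j
    show MvPolynomial.eval x (T j i) = MvPolynomial.eval x (T i j)
    rw [hTsymm i j]
  · intro x
    show (∑ i, MvPolynomial.eval x (T i i)) = 0
    rw [← map_sum, hTtrace, map_zero]
  · intro x
    funext i
    show (∑ j, pd j (fun y => MvPolynomial.eval y (T i j)) x) = p x i
    rw [Finset.sum_congr rfl fun j _ => pd_eval j (T i j) x, ← map_sum, hdivT i, ← hPval i x]


end
end

section
/- Exactness of the polynomial conformal elasticity complex at the div stage: let k be a natural number. A matrix field τ ∈ P_k(S∩T) satisfies div τ = 0 identically on ℝ³ if and only if there exists σ ∈ P_{k+3}(S∩T) with τ = cott σ, where cott is the linearized Cotton–York operator. -/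
noncomputable section

open Matrix

open MvPolynomial

/-- Antiderivative with respect to variable `j`. -/
def pint (j : Fin 3) (p : P3) : P3 :=
  Finsupp.sum (AddMonoidAlgebra.coeff p) fun α c => monomial (α + Finsupp.single j 1) (((α j : ℝ) + 1)⁻¹ * c)

/-- Substitution `X j := 0`, realized combinatorially. -/
def psub (j : Fin 3) (p : P3) : P3 :=
  Finsupp.sum (AddMonoidAlgebra.coeff p) fun α c => if α j = 0 then monomial α c else 0

lemma pint_monomial (j : Fin 3) (α : Fin 3 →₀ ℕ) (c : ℝ) :
    pint j (monomial α c) = monomial (α + Finsupp.single j 1) (((α j : ℝ) + 1)⁻¹ * c) := by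
  unfold pint
  rw [show AddMonoidAlgebra.coeff (monomial α c : P3) = Finsupp.single α c from rfl]
  apply Finsupp.sum_single_index
  simp

lemma psub_monomial (j : Fin 3) (α : Fin 3 →₀ ℕ) (c : ℝ) :
    psub j (monomial α c) = if α j = 0 then monomial α c else 0 := by
  unfold psub
  rw [show AddMonoidAlgebra.coeff (monomial α c : P3) = Finsupp.single α c from rfl]
  apply Finsupp.sum_single_index
  simp

lemma pint_add (j : Fin 3) (p q : P3) : pint j (p + q) = pint j p + pint j q := by
  unfold pint
  rw [AddMonoidAlgebra.coeff_add]
  apply Finsupp.sum_add_index' <;> intros <;> simp [mul_add, map_add]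

lemma psub_add (j : Fin 3) (p q : P3) : psub j (p + q) = psub j p + psub j q := by
  unfold psub
  rw [AddMonoidAlgebra.coeff_add]
  apply Finsupp.sum_add_index' <;> intros <;> split <;> simp [map_add]

/-- derivative of antiderivative. -/
lemma pderiv_pint (j : Fin 3) (p : P3) : pderiv j (pint j p) = p := by
  induction p using MvPolynomial.induction_on' with
  | add p q hp hq => rw [pint_add, map_add, hp, hq]
  | monomial α c =>
      rw [pint_monomial, pderiv_monomial]
      have h2 : α + Finsupp.single j 1 - Finsupp.single j 1 = α := add_tsub_cancel_right α _
      have h1 : ((α + Finsupp.single j 1 : Fin 3 →₀ ℕ)) j = α j + 1 := by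
        rw [Finsupp.add_apply, Finsupp.single_apply]; simp
      rw [h2, h1]
      congr 1
      have h3 : ((α j : ℝ) + 1) ≠ 0 := by positivity
      push_cast
      field_simp

/-- commutation of pderiv with pint for different variables. -/
lemma pderiv_pint_ne (i j : Fin 3) (h : i ≠ j) (p : P3) :
    pderiv i (pint j p) = pint j (pderiv i p) := by
  induction p using MvPolynomial.induction_on' with
  | add p q hp hq => rw [pint_add, map_add, map_add, pint_add, hp, hq]
  | monomial α c =>
      rw [pint_monomial, pderiv_monomial, pderiv_monomial, pint_monomial]
      have hji : ((α + Finsupp.single j 1 : Fin 3 →₀ ℕ)) i = α i := by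
        rw [Finsupp.add_apply, Finsupp.single_apply, if_neg h.symm]; ring
      have hsub : ((α - Finsupp.single i 1 : Fin 3 →₀ ℕ)) j = α j := by
        rw [Finsupp.tsub_apply, Finsupp.single_apply, if_neg h]; omega
      have hexp : α + Finsupp.single j 1 - Finsupp.single i 1
          = α - Finsupp.single i 1 + Finsupp.single j 1 := by
        ext a
        simp only [Finsupp.tsub_apply, Finsupp.add_apply, Finsupp.single_apply]
        by_cases h1 : j = a <;> by_cases h2 : i = a
        · exact absurd (h2.trans h1.symm) h
        all_goals simp only [if_pos, if_neg, h1, h2, if_true, if_false]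
        all_goals simp [h1, h2]
        all_goals omega
      rw [hji, hsub, hexp]
      congr 1
      ring

lemma pderiv_psub_self (j : Fin 3) (p : P3) : pderiv j (psub j p) = 0 := by
  induction p using MvPolynomial.induction_on' with
  | add p q hp hq => rw [psub_add, map_add, hp, hq, add_zero]
  | monomial α c =>
      rw [psub_monomial]
      split
      · rename_i h0
        rw [pderiv_monomial, h0]
        simp
      · simp

/-- Fundamental theorem of calculus. -/
lemma pint_pderiv (j : Fin 3) (p : P3) : pint j (pderiv j p) = p - psub j p := by
  induction p using MvPolynomial.induction_on' with
  | add p q hp hq => rw [map_add, pint_add, hp, hq, psub_add]; ring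
  | monomial α c =>
      rw [pderiv_monomial, pint_monomial, psub_monomial]
      rcases Nat.eq_zero_or_pos (α j) with h0|h0
      · rw [if_pos h0, h0]
        simp
      · rw [if_neg (by omega)]
        have hsub : ((α - Finsupp.single j 1 : Fin 3 →₀ ℕ)) j = α j - 1 := by
          rw [Finsupp.tsub_apply, Finsupp.single_apply, if_pos rfl]
        have hexp : α - Finsupp.single j 1 + Finsupp.single j 1 = α := by
          ext a
          simp only [Finsupp.tsub_apply, Finsupp.add_apply, Finsupp.single_apply]
          rcases eq_or_ne j a with rfl|ha
          · simp only [if_pos rfl, if_true]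
            omega
          · simp [ha]
        rw [hsub, hexp, sub_zero]
        congr 1
        have h1 : ((α j : ℝ) - 1 + 1) = (α j : ℝ) := by ring
        have h2 : ((α j - 1 : ℕ) : ℝ) = (α j : ℝ) - 1 := by
          push_cast [h0]; ring
        rw [h2, h1]
        have h3 : (α j : ℝ) ≠ 0 := by positivity
        field_simp

/-- Schwarz for pderiv. -/
lemma pderiv_comm (i j : Fin 3) (p : P3) :
    pderiv i (pderiv j p) = pderiv j (pderiv i p) := by
  rcases eq_or_ne i j with rfl|h
  · rfl
  induction p using MvPolynomial.induction_on' with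
  | add p q hp hq => rw [map_add, map_add, map_add, map_add, hp, hq]
  | monomial α c =>
      rw [pderiv_monomial, pderiv_monomial, pderiv_monomial, pderiv_monomial]
      have h1 : ((α - Finsupp.single j 1 : Fin 3 →₀ ℕ)) i = α i := by
        rw [Finsupp.tsub_apply, Finsupp.single_apply, if_neg h.symm]; omega
      have h2 : ((α - Finsupp.single i 1 : Fin 3 →₀ ℕ)) j = α j := by
        rw [Finsupp.tsub_apply, Finsupp.single_apply, if_neg h]; omega
      have h3 : α - Finsupp.single j 1 - Finsupp.single i 1
          = α - Finsupp.single i 1 - Finsupp.single j 1 := by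
        ext a
        simp only [Finsupp.tsub_apply]
        omega
      rw [h1, h2, h3]
      congr 1
      ring

lemma pint_zero (j : Fin 3) : pint j 0 = 0 := by
  unfold pint; simp

lemma psub_zero (j : Fin 3) : psub j 0 = 0 := by
  unfold psub; simp

lemma pint_sum {ι : Type*} (j : Fin 3) (s : Finset ι) (f : ι → P3) :
    pint j (∑ a ∈ s, f a) = ∑ a ∈ s, pint j (f a) := by
  classical
  induction s using Finset.induction_on with
  | empty => simp [pint_zero]
  | insert a s h ih => simp [Finset.sum_insert h, pint_add, ih]

lemma psub_sum {ι : Type*} (j : Fin 3) (s : Finset ι) (f : ι → P3) :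
    psub j (∑ a ∈ s, f a) = ∑ a ∈ s, psub j (f a) := by
  classical
  induction s using Finset.induction_on with
  | empty => simp [psub_zero]
  | insert a s h ih => simp [Finset.sum_insert h, psub_add, ih]

lemma degsum_eq (α : Fin 3 →₀ ℕ) : (α.sum fun _ e => e) = ∑ a : Fin 3, α a :=
  Finsupp.sum_fintype _ _ (fun _ => rfl)

lemma degsum_eq' (α : Fin 3 →₀ ℕ) : (α.sum fun _ => (id : ℕ → ℕ)) = ∑ a : Fin 3, α a :=
  Finsupp.sum_fintype _ _ (fun _ => rfl)

lemma totalDegree_pderiv_le (i : Fin 3) (p : P3) :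
    (pderiv i p).totalDegree ≤ p.totalDegree - 1 := by
  conv_lhs => rw [p.as_sum]
  rw [map_sum]
  refine le_trans (totalDegree_finset_sum _ _) (Finset.sup_le fun α hα => ?_)
  rw [pderiv_monomial]
  rcases Nat.eq_zero_or_pos (α i) with h0|h0
  · rw [h0]; simp
  · refine le_trans (totalDegree_monomial_le _ _) ?_
    have h1 := le_totalDegree hα
    rw [degsum_eq] at h1
    rw [degsum_eq']
    have h2 : ∀ a : Fin 3, ((α - Finsupp.single i 1 : Fin 3 →₀ ℕ)) a
        = α a - (if i = a then 1 else 0) := by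
      intro a; rw [Finsupp.tsub_apply, Finsupp.single_apply]
    simp only [h2, Fin.sum_univ_three] at *
    fin_cases i <;> simp_all <;> omega

lemma totalDegree_pint_le (j : Fin 3) (p : P3) :
    (pint j p).totalDegree ≤ p.totalDegree + 1 := by
  conv_lhs => rw [p.as_sum]
  rw [pint_sum]
  refine le_trans (totalDegree_finset_sum _ _) (Finset.sup_le fun α hα => ?_)
  rw [pint_monomial]
  refine le_trans (totalDegree_monomial_le _ _) ?_
  have h1 := le_totalDegree hα
  rw [degsum_eq] at h1
  rw [degsum_eq']
  have h2 : ∀ a : Fin 3, ((α + Finsupp.single j 1 : Fin 3 →₀ ℕ)) a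
      = α a + (if j = a then 1 else 0) := by
    intro a; rw [Finsupp.add_apply, Finsupp.single_apply]
  simp only [h2, Fin.sum_univ_three] at *
  fin_cases j <;> simp_all <;> omega

lemma totalDegree_psub_le (j : Fin 3) (p : P3) :
    (psub j p).totalDegree ≤ p.totalDegree := by
  conv_lhs => rw [p.as_sum]
  rw [psub_sum]
  refine le_trans (totalDegree_finset_sum _ _) (Finset.sup_le fun α hα => ?_)
  rw [psub_monomial]
  split
  · exact le_trans (totalDegree_monomial_le _ _) (le_totalDegree hα)
  · simp

/-- The bridge: evaluation of an `MvPolynomial` has the expected Fréchet derivative. -/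
lemma eval_hasFDerivAt (p : P3) (x : Fin 3 → ℝ) :
    HasFDerivAt (fun y : Fin 3 → ℝ => eval y p)
      (∑ i, eval x (pderiv i p) • (ContinuousLinearMap.proj i : (Fin 3 → ℝ) →L[ℝ] ℝ)) x := by
  induction p using MvPolynomial.induction_on with
  | C a =>
      simpa using hasFDerivAt_const a x
  | add p q hp hq =>
      have := hp.add hq
      simp only [eval_add, map_add] at this ⊢
      refine this.congr_fderiv ?_
      rw [← Finset.sum_add_distrib]
      congr 1; ext i
      rw [add_smul]
  | mul_X p j hp =>
      have hXj : HasFDerivAt (fun y : Fin 3 → ℝ => y j)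
          (ContinuousLinearMap.proj j : (Fin 3 → ℝ) →L[ℝ] ℝ) x := by
        exact (ContinuousLinearMap.proj (R := ℝ) (φ := fun _ : Fin 3 => ℝ) j).hasFDerivAt
      have key := hp.mul hXj
      simp only [eval_mul, eval_X] at key ⊢
      refine key.congr_fderiv ?_
      apply ContinuousLinearMap.ext
      intro v
      simp only [ContinuousLinearMap.coe_sum', Finset.sum_apply,
        ContinuousLinearMap.smul_apply, ContinuousLinearMap.proj_apply,
        ContinuousLinearMap.add_apply, smul_eq_mul, Fin.sum_univ_three]
      fin_cases j <;>
        simp [pderiv_mul, pderiv_X, Pi.single_apply, Fin.sum_univ_three] <;> ring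

lemma fderiv_eval_apply (p : P3) (x w : Fin 3 → ℝ) :
    fderiv ℝ (fun y => eval y p) x w = ∑ i, eval x (pderiv i p) * w i := by
  rw [(eval_hasFDerivAt p x).fderiv]
  simp

lemma fderiv_eval_single (p : P3) (x : Fin 3 → ℝ) (i : Fin 3) :
    fderiv ℝ (fun y => eval y p) x (Pi.single i 1) = eval x (pderiv i p) := by
  rw [fderiv_eval_apply]
  rw [Finset.sum_eq_single i]
  · simp
  · intro b _ hb; simp [Pi.single_apply, hb]
  · simp

/-! ### Part II: algebraic vector/matrix calculus on polynomial fields -/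
open Matrix

abbrev PV := Fin 3 → P3
abbrev PM := Matrix (Fin 3) (Fin 3) P3

def pcurlV (v : PV) : PV := fun i => pderiv (i+1) (v (i+2)) - pderiv (i+2) (v (i+1))
def pdivV (v : PV) : P3 := ∑ i, pderiv i (v i)
def pgradS (f : P3) : PV := fun i => pderiv i f
def pmcurl (A : PM) : PM :=
  Matrix.of fun i j => pderiv (j+1) (A i (j+2)) - pderiv (j+2) (A i (j+1))
def pmdiv (A : PM) : PV := fun i => ∑ j, pderiv j (A i j)
def pvgrad (v : PV) : PM := Matrix.of fun i j => pderiv j (v i)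
/-- Twice the skew-vector of a matrix. -/
def pskwv (A : PM) : PV := ![A 2 1 - A 1 2, A 0 2 - A 2 0, A 1 0 - A 0 1]
def pSinv (A : PM) : PM := Aᵀ - ((1/2 : ℝ) • Matrix.trace A) • (1 : PM)
def pSop (A : PM) : PM := Aᵀ - Matrix.trace A • (1 : PM)
def pinc (A : PM) : PM := pmcurl (pSinv (pmcurl A))
def pcott (A : PM) : PM := pmcurl (pSinv (pinc A))

@[simp] lemma fin3_1 : ((0:Fin 3)+1) = 1 := rfl
@[simp] lemma fin3_2 : ((0:Fin 3)+2) = 2 := rfl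
@[simp] lemma fin3_3 : ((1:Fin 3)+1) = 2 := rfl
@[simp] lemma fin3_4 : ((1:Fin 3)+2) = 0 := rfl
@[simp] lemma fin3_5 : ((2:Fin 3)+1) = 0 := rfl
@[simp] lemma fin3_6 : ((2:Fin 3)+2) = 1 := rfl
@[simp] lemma fin3_7 : (3:Fin 3) = 0 := rfl
@[simp] lemma fin3_8 : (4:Fin 3) = 1 := rfl

/-- div ∘ curl = 0 (vector fields). -/
lemma pdiv_pcurl (v : PV) : pdivV (pcurlV v) = 0 := by
  simp only [pdivV, pcurlV, Fin.sum_univ_three, map_sub, fin3_1, fin3_2, fin3_3, fin3_4,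
    fin3_5, fin3_6]
  linear_combination (pderiv_comm 0 1 (v 2)) - (pderiv_comm 0 2 (v 1)) + (pderiv_comm 1 2 (v 0))

lemma pv_ext {v w : PV} (h0 : v 0 = w 0) (h1 : v 1 = w 1) (h2 : v 2 = w 2) : v = w := by
  funext i; fin_cases i; exacts [h0, h1, h2]

/-- curl ∘ grad = 0 (scalar fields). -/
lemma pcurl_pgrad (f : P3) : pcurlV (pgradS f) = 0 := by
  apply pv_ext <;>
    simp only [pcurlV, pgradS, Fin.isValue, Pi.zero_apply, fin3_1, fin3_2, fin3_3, fin3_4,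
      fin3_5, fin3_6] <;>
    [linear_combination pderiv_comm 1 2 f; linear_combination pderiv_comm 2 0 f;
     linear_combination pderiv_comm 0 1 f]

lemma pmdiv_pmcurl (A : PM) : pmdiv (pmcurl A) = 0 := by
  funext i
  have h : pmdiv (pmcurl A) i = pdivV (pcurlV (fun j => A i j)) := by
    simp [pmdiv, pdivV, pmcurl, pcurlV]
  rw [h, pdiv_pcurl]
  rfl

lemma pmcurl_pvgrad (v : PV) : pmcurl (pvgrad v) = 0 := by
  funext i j
  have h : pmcurl (pvgrad v) i j = pcurlV (pgradS (v i)) j := by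
    simp [pmcurl, pvgrad, pcurlV, pgradS]
  rw [h, pcurl_pgrad]
  rfl

/-! ### degree helpers -/

lemma deg_neg_le {p : P3} {n : ℕ} (hp : p.totalDegree ≤ n) : (-p).totalDegree ≤ n := by
  rwa [totalDegree_neg]

lemma deg_add_le {p q : P3} {n : ℕ} (hp : p.totalDegree ≤ n) (hq : q.totalDegree ≤ n) :
    (p + q).totalDegree ≤ n :=
  le_trans (totalDegree_add _ _) (sup_le hp hq)

lemma deg_sub_le {p q : P3} {n : ℕ} (hp : p.totalDegree ≤ n) (hq : q.totalDegree ≤ n) :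
    (p - q).totalDegree ≤ n := by
  rw [sub_eq_add_neg]; exact deg_add_le hp (deg_neg_le hq)

lemma deg_C_mul_le {c : ℝ} {p : P3} {n : ℕ} (hp : p.totalDegree ≤ n) :
    ((C c : P3) * p).totalDegree ≤ n :=
  le_trans (totalDegree_mul _ _) (by simpa using hp)

lemma deg_pderiv_le' {p : P3} {n : ℕ} (hp : p.totalDegree ≤ n) (i : Fin 3) :
    (pderiv i p).totalDegree ≤ n :=
  le_trans (totalDegree_pderiv_le i p) (le_trans (Nat.sub_le _ _) hp)

lemma deg_pderiv_lt {p : P3} {n : ℕ} (hp : p.totalDegree ≤ n + 1) (i : Fin 3) :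
    (pderiv i p).totalDegree ≤ n :=
  le_trans (totalDegree_pderiv_le i p) (by omega)

lemma deg_pint_le {p : P3} {n : ℕ} (hp : p.totalDegree ≤ n) (j : Fin 3) :
    (pint j p).totalDegree ≤ n + 1 :=
  le_trans (totalDegree_pint_le j p) (by omega)

lemma deg_psub_le {p : P3} {n : ℕ} (hp : p.totalDegree ≤ n) (j : Fin 3) :
    (psub j p).totalDegree ≤ n :=
  le_trans (totalDegree_psub_le j p) hp

/-! ### linearity helpers -/

lemma pint_neg (j : Fin 3) (p : P3) : pint j (-p) = - pint j p := by
  have := pint_add j p (-p)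
  simp only [add_neg_cancel, pint_zero] at this
  linear_combination -this

lemma pskwv_sub (A B : PM) : pskwv (A - B) = pskwv A - pskwv B := by
  apply pv_ext <;> simp [pskwv] <;> ring

lemma pmcurl_sub (A B : PM) : pmcurl (A - B) = pmcurl A - pmcurl B := by
  ext i j
  simp [pmcurl, Matrix.sub_apply, map_sub]
  ring

lemma pmcurl_zero : pmcurl 0 = 0 := by
  ext i j; simp [pmcurl]

lemma pSinv_zero : pSinv 0 = 0 := by
  simp [pSinv]

lemma pSinv_sub (A B : PM) : pSinv (A - B) = pSinv A - pSinv B := by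
  simp only [pSinv, Matrix.transpose_sub, Matrix.trace_sub, smul_sub, sub_smul]
  abel

/-! ### structural identities -/

/-- skew-vector of a curl. -/
lemma pskwv_pmcurl (A : PM) (k : Fin 3) :
    pskwv (pmcurl A) k = pmdiv Aᵀ k - pderiv k (Matrix.trace A) := by
  fin_cases k <;>
    simp [pskwv, pmcurl, pmdiv, Matrix.trace, Matrix.diag, Fin.sum_univ_three, map_add,
      Matrix.transpose_apply, map_sub] <;> ring

/-- trace of a curl. -/
lemma ptr_pmcurl (A : PM) : Matrix.trace (pmcurl A) = pdivV (pskwv A) := by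
  simp [pskwv, pmcurl, pdivV, Matrix.trace, Matrix.diag, Fin.sum_univ_three, map_sub]
  ring

/-- skew-vector of a gradient. -/
lemma pskwv_pvgrad (v : PV) : pskwv (pvgrad v) = pcurlV v := by
  apply pv_ext <;> simp [pskwv, pvgrad, pcurlV] <;> ring

lemma sym_of_pskwv {A : PM} (h : pskwv A = 0) : Aᵀ = A := by
  have h0 := congrFun h 0
  have h1 := congrFun h 1
  have h2 := congrFun h 2
  simp only [pskwv, Pi.zero_apply, Matrix.cons_val_zero, Matrix.cons_val_one,
    Matrix.head_cons, Matrix.cons_val_two, Matrix.tail_cons] at h0 h1 h2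
  rw [sub_eq_zero] at h0 h1 h2
  ext i j
  fin_cases i <;> fin_cases j <;>
    simp [Matrix.transpose_apply, h0, h1, h2]

lemma pskwv_of_sym {A : PM} (h : Aᵀ = A) : pskwv A = 0 := by
  have he : ∀ i j, A j i = A i j := fun i j =>
    (Matrix.transpose_apply A i j).symm.trans (by rw [h])
  apply pv_ext <;> simp [pskwv]
  · rw [he 1 2]; ring
  · rw [he 2 0]; ring
  · rw [he 0 1]; ring

/-! ### homotopy operators -/

def pcurlInv (u : PV) : PV := ![0, pint 0 (u 2), - pint 0 (u 1) + pint 1 (psub 0 (u 0))]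

lemma pcurl_pcurlInv (u : PV) (h : pdivV u = 0) : pcurlV (pcurlInv u) = u := by
  have hd : pderiv 1 (u 1) = - pderiv 0 (u 0) - pderiv 2 (u 2) := by
    simp only [pdivV, Fin.sum_univ_three] at h
    linear_combination h
  apply pv_ext
  · show pderiv 1 (pcurlInv u 2) - pderiv 2 (pcurlInv u 1) = u 0
    simp only [pcurlInv, Matrix.cons_val_zero, Matrix.cons_val_one, Matrix.head_cons,
      Matrix.cons_val_two, Matrix.tail_cons, map_add, map_neg]
    rw [pderiv_pint_ne 1 0 (by decide), pderiv_pint (1 : Fin 3), pderiv_pint_ne 2 0 (by decide),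
      hd]
    have h2 : pint 0 (-pderiv 0 (u 0) - pderiv 2 (u 2)) =
        - pint 0 (pderiv 0 (u 0)) - pint 0 (pderiv 2 (u 2)) := by
      rw [sub_eq_add_neg, pint_add, pint_neg, pint_neg, sub_eq_add_neg]
    rw [h2, pint_pderiv]
    ring
  · show pderiv 2 (pcurlInv u 0) - pderiv 0 (pcurlInv u 2) = u 1
    simp only [pcurlInv, Matrix.cons_val_zero, Matrix.cons_val_one, Matrix.head_cons,
      Matrix.cons_val_two, Matrix.tail_cons, map_add, map_neg, map_zero]
    rw [pderiv_pint (0 : Fin 3), pderiv_pint_ne 0 1 (by decide), pderiv_psub_self, pint_zero]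
    ring
  · show pderiv 0 (pcurlInv u 1) - pderiv 1 (pcurlInv u 0) = u 2
    simp only [pcurlInv, Matrix.cons_val_zero, Matrix.cons_val_one, Matrix.head_cons, map_zero]
    rw [pderiv_pint (0 : Fin 3)]
    ring

lemma pcurlInv_deg {u : PV} {n : ℕ} (h : ∀ i, (u i).totalDegree ≤ n) (i : Fin 3) :
    (pcurlInv u i).totalDegree ≤ n + 1 := by
  fin_cases i
  · simpa [pcurlInv] using Nat.zero_le _
  · simpa [pcurlInv] using deg_pint_le (h 2) 0
  · show ((- pint 0 (u 1) + pint 1 (psub 0 (u 0))).totalDegree ≤ n + 1)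
    exact deg_add_le (deg_neg_le (deg_pint_le (h 1) 0))
      (deg_pint_le (deg_psub_le (h 0) 0) 1)

def pdivInvS (f : P3) : PV := ![pint 0 f, 0, 0]

lemma pdiv_pdivInvS (f : P3) : pdivV (pdivInvS f) = f := by
  simp [pdivV, pdivInvS, Fin.sum_univ_three, pderiv_pint]

lemma pdivInvS_deg {f : P3} {n : ℕ} (h : f.totalDegree ≤ n) (i : Fin 3) :
    (pdivInvS f i).totalDegree ≤ n + 1 := by
  fin_cases i
  · simpa [pdivInvS] using deg_pint_le h 0
  · simpa [pdivInvS] using Nat.zero_le _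
  · simpa [pdivInvS] using Nat.zero_le _

lemma hhalf : (C (1/2:ℝ) : P3) * 2 = 1 := by
  have h2 : (2 : P3) = C 2 := (map_ofNat C 2).symm
  rw [h2, ← C_mul]
  norm_num

lemma trace_pvgrad (v : PV) : Matrix.trace (pvgrad v) = pdivV v := by
  simp [pvgrad, pdivV, Matrix.trace, Matrix.diag]

lemma pmdiv_sub (A B : PM) : pmdiv (A - B) = pmdiv A - pmdiv B := by
  funext i
  simp [pmdiv, Matrix.sub_apply, map_sub, Finset.sum_sub_distrib]

lemma pmdiv_smul_one (t : P3) : pmdiv (t • (1 : PM)) = pgradS t := by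
  funext i
  fin_cases i <;>
    simp [pmdiv, Fin.sum_univ_three, Matrix.smul_apply, Matrix.one_apply, pgradS,
      smul_eq_mul]

lemma pmdiv_transpose_pvgrad (w : PV) : pmdiv ((pvgrad w)ᵀ) = pgradS (pdivV w) := by
  funext i
  simp only [pmdiv, pvgrad, pgradS, pdivV, Matrix.transpose_apply, Matrix.of_apply,
    Fin.sum_univ_three, map_add]
  linear_combination pderiv_comm 0 i (w 0) + pderiv_comm 1 i (w 1) + pderiv_comm 2 i (w 2)

lemma pmcurl_transpose_pvgrad (z : PV) : pmcurl ((pvgrad z)ᵀ) = (pvgrad (pcurlV z))ᵀ := by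
  refine Matrix.ext fun i j => ?_
  simp only [pmcurl, pvgrad, pcurlV, Matrix.transpose_apply, Matrix.of_apply, map_sub]
  linear_combination pderiv_comm (j+1) i (z (j+2)) - pderiv_comm (j+2) i (z (j+1))

lemma pSinv_pSop (A : PM) : pSinv (pSop A) = A := by
  simp only [pSop, pSinv, Matrix.transpose_sub, Matrix.transpose_smul, Matrix.transpose_one,
    Matrix.transpose_transpose, Matrix.trace_sub, Matrix.trace_smul, Matrix.trace_transpose,
    Matrix.trace_one]
  have h1 : (1/2:ℝ) • (Matrix.trace A - Matrix.trace A • (Fintype.card (Fin 3) : P3))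
      = - Matrix.trace A := by
    rw [smul_eq_C_mul]
    have : (Fintype.card (Fin 3) : P3) = 3 := by norm_num
    rw [this, smul_eq_mul]
    linear_combination (- Matrix.trace A) * hhalf
  rw [h1]
  simp only [neg_smul, sub_neg_eq_add, sub_add_cancel]

/-- Row-potential: a matrix whose row-wise curl is `A`, provided `pmdiv A = 0`. -/
def rowPot (A : PM) : PM := Matrix.of fun i j => pcurlInv (fun m => A i m) j

lemma pmcurl_rowPot {A : PM} (h : pmdiv A = 0) : pmcurl (rowPot A) = A := by
  refine Matrix.ext fun i j => ?_
  have hrow : pdivV (fun m => A i m) = 0 := by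
    have := congrFun h i
    simpa [pmdiv, pdivV] using this
  have h1 : pmcurl (rowPot A) i j = pcurlV (pcurlInv (fun m => A i m)) j := rfl
  rw [h1, pcurl_pcurlInv _ hrow]

lemma rowPot_deg {A : PM} {n : ℕ} (h : ∀ i j, (A i j).totalDegree ≤ n) (i j : Fin 3) :
    (rowPot A i j).totalDegree ≤ n + 1 :=
  pcurlInv_deg (fun m => h i m) j

lemma pskwv_deg {A : PM} {n : ℕ} (h : ∀ i j, (A i j).totalDegree ≤ n) (i : Fin 3) :
    (pskwv A i).totalDegree ≤ n := by
  fin_cases i <;> simp only [pskwv, Matrix.cons_val_zero, Matrix.cons_val_one,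
    Matrix.head_cons, Matrix.cons_val_two, Matrix.tail_cons] <;>
    exact deg_sub_le (h _ _) (h _ _)

lemma trace_deg {A : PM} {n : ℕ} (h : ∀ i j, (A i j).totalDegree ≤ n) :
    (Matrix.trace A).totalDegree ≤ n := by
  simp only [Matrix.trace, Matrix.diag, Fin.sum_univ_three]
  exact deg_add_le (deg_add_le (h 0 0) (h 1 1)) (h 2 2)

/-- The main algebraic construction: an explicit `pcott`-potential for any
divergence-free symmetric traceless polynomial matrix field. -/
theorem main_alg (k : ℕ) (P : PM) (hsym : Pᵀ = P) (htr : Matrix.trace P = 0)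
    (hdiv : pmdiv P = 0) (hdeg : ∀ i j, (P i j).totalDegree ≤ k) :
    ∃ S : PM, Sᵀ = S ∧ Matrix.trace S = 0 ∧ (∀ i j, (S i j).totalDegree ≤ k + 3) ∧
      pcott S = P := by
  classical
  -- Step 1 : row potential for P
  set μ : PM := rowPot P with hμdef
  have hμcurl : pmcurl μ = P := pmcurl_rowPot hdiv
  have hμdeg : ∀ i j, (μ i j).totalDegree ≤ k + 1 := rowPot_deg hdeg
  -- Step 2 : symmetrize
  set u : PV := pskwv μ with hudef
  have hudiv : pdivV u = 0 := by
    rw [hudef, ← ptr_pmcurl, hμcurl, htr]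
  have hudeg : ∀ i, (u i).totalDegree ≤ k + 1 := pskwv_deg hμdeg
  set v : PV := pcurlInv u with hvdef
  have hvcurl : pcurlV v = u := pcurl_pcurlInv u hudiv
  have hvdeg : ∀ i, (v i).totalDegree ≤ k + 2 := pcurlInv_deg hudeg
  set A : PM := μ - pvgrad v with hAdef
  have hAcurl : pmcurl A = P := by
    rw [hAdef, pmcurl_sub, pmcurl_pvgrad, sub_zero, hμcurl]
  have hAskw : pskwv A = 0 := by
    rw [hAdef, pskwv_sub, pskwv_pvgrad, hvcurl, sub_self]
  have hAsym : Aᵀ = A := sym_of_pskwv hAskw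
  have hAdeg : ∀ i j, (A i j).totalDegree ≤ k + 1 := by
    intro i j
    have h1 : (pvgrad v i j).totalDegree ≤ k + 1 := deg_pderiv_lt (hvdeg i) j
    exact deg_sub_le (hμdeg i j) h1
  -- Step 3 : β = S A
  set β : PM := pSop A with hβdef
  have hβsym : βᵀ = β := by
    rw [hβdef]
    simp only [pSop, Matrix.transpose_sub, Matrix.transpose_smul, Matrix.transpose_one,
      Matrix.transpose_transpose, hAsym]
  have hβskw : pskwv β = 0 := pskwv_of_sym hβsym
  have hβdiv : pmdiv β = 0 := by
    funext i
    have h1 : pskwv (pmcurl A) i = pmdiv Aᵀ i - pderiv i (Matrix.trace A) :=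
      pskwv_pmcurl A i
    rw [hAcurl] at h1
    have h2 : pskwv P i = 0 := by rw [pskwv_of_sym hsym]; rfl
    rw [h2] at h1
    have h3 : pmdiv Aᵀ i = pderiv i (Matrix.trace A) := by linear_combination -h1
    have h4 : pmdiv β i = pmdiv Aᵀ i - pmdiv (Matrix.trace A • (1 : PM)) i := by
      rw [hβdef]
      show pmdiv (Aᵀ - Matrix.trace A • 1) i = _
      rw [pmdiv_sub]; rfl
    rw [h4, h3, pmdiv_smul_one]
    show pderiv i (Matrix.trace A) - pderiv i (Matrix.trace A) = 0
    ring
  have hβdeg : ∀ i j, (β i j).totalDegree ≤ k + 1 := by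
    intro i j
    rw [hβdef]
    show ((Aᵀ - Matrix.trace A • 1) i j).totalDegree ≤ k + 1
    have h1 : ((Matrix.trace A • (1:PM)) i j).totalDegree ≤ k + 1 := by
      have ht := trace_deg hAdeg
      rcases eq_or_ne i j with rfl|hne
      · simpa [Matrix.smul_apply, Matrix.one_apply, smul_eq_mul] using ht
      · simp [Matrix.smul_apply, Matrix.one_apply, hne]
    exact deg_sub_le (hAdeg j i) h1
  -- Step 4 : F with curl F = β
  set F : PM := rowPot β with hFdef
  have hFcurl : pmcurl F = β := pmcurl_rowPot hβdiv
  have hFdeg : ∀ i j, (F i j).totalDegree ≤ k + 2 := rowPot_deg hβdeg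
  -- Step 5 : w with div w = tr F
  set w : PV := pdivInvS (Matrix.trace F) with hwdef
  have hwdiv : pdivV w = Matrix.trace F := pdiv_pdivInvS _
  have hwdeg : ∀ i, (w i).totalDegree ≤ k + 3 := pdivInvS_deg (trace_deg hFdeg)
  -- Step 6 : G
  set G : PM := Fᵀ - (pvgrad w)ᵀ with hGdef
  have hGtr : Matrix.trace G = 0 := by
    rw [hGdef, Matrix.trace_sub, Matrix.trace_transpose, Matrix.trace_transpose,
      trace_pvgrad, hwdiv, sub_self]
  have hGdiv : pmdiv G = 0 := by
    funext i
    have h1 : pskwv (pmcurl F) i = pmdiv Fᵀ i - pderiv i (Matrix.trace F) :=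
      pskwv_pmcurl F i
    rw [hFcurl] at h1
    have h2 : pskwv β i = 0 := by rw [hβskw]; rfl
    rw [h2] at h1
    have h3 : pmdiv Fᵀ i = pderiv i (Matrix.trace F) := by linear_combination -h1
    have h4 : pmdiv G i = pmdiv Fᵀ i - pmdiv ((pvgrad w)ᵀ) i := by
      rw [hGdef, pmdiv_sub]; rfl
    rw [h4, h3, pmdiv_transpose_pvgrad, hwdiv]
    show pderiv i (Matrix.trace F) - pderiv i (Matrix.trace F) = 0
    ring
  have hGdeg : ∀ i j, (G i j).totalDegree ≤ k + 2 := by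
    intro i j
    rw [hGdef]
    show ((Fᵀ - (pvgrad w)ᵀ) i j).totalDegree ≤ k + 2
    exact deg_sub_le (hFdeg j i) (deg_pderiv_lt (hwdeg j) i)
  -- Step 7 : ρ with curl ρ = G
  set ρ : PM := rowPot G with hρdef
  have hρcurl : pmcurl ρ = G := pmcurl_rowPot hGdiv
  have hρdeg : ∀ i j, (ρ i j).totalDegree ≤ k + 3 := rowPot_deg hGdeg
  -- Step 8 : symmetrize ρ
  set s : PV := pskwv ρ with hsdef
  have hsdiv : pdivV s = 0 := by rw [hsdef, ← ptr_pmcurl, hρcurl, hGtr]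
  set z : PV := pcurlInv s with hzdef
  have hzcurl : pcurlV z = s := pcurl_pcurlInv s hsdiv
  have hzdeg : ∀ i, (z i).totalDegree ≤ k + 4 := pcurlInv_deg (pskwv_deg hρdeg)
  set ρ' : PM := ρ - pvgrad z with hρ'def
  have hρ'curl : pmcurl ρ' = G := by
    rw [hρ'def, pmcurl_sub, pmcurl_pvgrad, sub_zero, hρcurl]
  have hρ'skw : pskwv ρ' = 0 := by
    rw [hρ'def, pskwv_sub, pskwv_pvgrad, hzcurl, hsdef, sub_self]
  have hρ'sym : ρ'ᵀ = ρ' := sym_of_pskwv hρ'skw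
  have hρ'deg : ∀ i j, (ρ' i j).totalDegree ≤ k + 3 := by
    intro i j
    exact deg_sub_le (hρdeg i j) (deg_pderiv_lt (hzdeg i) j)
  -- key : pinc ρ' = β
  have hSinvG : pSinv G = F - pvgrad w := by
    rw [pSinv, hGtr]
    simp only [smul_zero, zero_smul, sub_zero]
    rw [hGdef]
    simp only [Matrix.transpose_sub, Matrix.transpose_transpose]
  have hincρ' : pinc ρ' = β := by
    rw [pinc, hρ'curl, hSinvG, pmcurl_sub, pmcurl_pvgrad, sub_zero, hFcurl]
  -- Step 9 : trace fix
  set z2 : PV := pdivInvS (Matrix.trace ρ') with hz2def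
  have hz2div : pdivV z2 = Matrix.trace ρ' := pdiv_pdivInvS _
  have hz2deg : ∀ i, (z2 i).totalDegree ≤ k + 4 := pdivInvS_deg (trace_deg hρ'deg)
  set D : PM := (C (1/2 : ℝ) : P3) • (pvgrad z2 + (pvgrad z2)ᵀ) with hDdef
  have hDsym : Dᵀ = D := by
    rw [hDdef]
    simp only [Matrix.transpose_smul, Matrix.transpose_add, Matrix.transpose_transpose]
    rw [add_comm]
  have hDtr : Matrix.trace D = Matrix.trace ρ' := by
    rw [hDdef, Matrix.trace_smul, Matrix.trace_add, Matrix.trace_transpose, trace_pvgrad,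
      hz2div, smul_eq_mul]
    linear_combination (Matrix.trace ρ') * hhalf
  have hDdeg : ∀ i j, (D i j).totalDegree ≤ k + 3 := by
    intro i j
    rw [hDdef]
    have h1 : ((pvgrad z2 + (pvgrad z2)ᵀ) i j).totalDegree ≤ k + 3 := by
      show ((pvgrad z2 i j) + (pvgrad z2 j i)).totalDegree ≤ k + 3
      exact deg_add_le (deg_pderiv_lt (hz2deg i) j) (deg_pderiv_lt (hz2deg j) i)
    show ((C (1/2:ℝ) : P3) • (pvgrad z2 + (pvgrad z2)ᵀ) i j).totalDegree ≤ k + 3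
    rw [smul_eq_mul]
    exact deg_C_mul_le h1
  have hDcott : pmcurl (pSinv (pmcurl D)) = 0 := by
    have h1 : pmcurl D = (C (1/2 : ℝ) : P3) • ((pvgrad (pcurlV z2))ᵀ) := by
      rw [hDdef]
      have hlin : pmcurl ((C (1/2 : ℝ) : P3) • (pvgrad z2 + (pvgrad z2)ᵀ))
          = (C (1/2 : ℝ) : P3) • (pmcurl (pvgrad z2) + pmcurl ((pvgrad z2)ᵀ)) := by
        refine Matrix.ext fun i j => ?_
        simp only [pmcurl, Matrix.smul_apply, Matrix.add_apply, Matrix.of_apply,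
          smul_eq_mul, map_sub, map_add]
        rw [pderiv_C_mul, pderiv_C_mul]
        simp only [map_add]
        ring
      rw [hlin, pmcurl_pvgrad, zero_add, pmcurl_transpose_pvgrad]
    have h2 : Matrix.trace ((pvgrad (pcurlV z2))ᵀ) = 0 := by
      rw [Matrix.trace_transpose, trace_pvgrad, pdiv_pcurl]
    have h3 : pSinv (pmcurl D) = (C (1/2 : ℝ) : P3) • (pvgrad (pcurlV z2)) := by
      rw [h1, pSinv]
      rw [Matrix.trace_smul, h2, smul_zero, smul_zero, zero_smul, sub_zero,
        Matrix.transpose_smul, Matrix.transpose_transpose]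
    rw [h3]
    refine Matrix.ext fun i j => ?_
    have h4 : pmcurl ((C (1/2 : ℝ) : P3) • pvgrad (pcurlV z2)) i j
        = (C (1/2 : ℝ) : P3) * (pmcurl (pvgrad (pcurlV z2)) i j) := by
      simp only [pmcurl, Matrix.smul_apply, Matrix.of_apply, smul_eq_mul, map_sub]
      rw [pderiv_C_mul, pderiv_C_mul]
      ring
    rw [h4, pmcurl_pvgrad]
    simp
  -- final assembly
  refine ⟨ρ' - D, ?_, ?_, ?_, ?_⟩
  · simp only [Matrix.transpose_sub, hρ'sym, hDsym]
  · rw [Matrix.trace_sub, hDtr, sub_self]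
  · intro i j
    show ((ρ' - D) i j).totalDegree ≤ k + 3
    exact deg_sub_le (hρ'deg i j) (hDdeg i j)
  · have hincD : pinc D = 0 := hDcott ▸ rfl
    have hincS : pinc (ρ' - D) = β := by
      rw [pinc, pmcurl_sub, pSinv_sub, pmcurl_sub]
      have e1 : pmcurl (pSinv (pmcurl ρ')) = β := hincρ'
      have e2 : pmcurl (pSinv (pmcurl D)) = 0 := hDcott
      rw [e1, e2, sub_zero]
    rw [pcott, hincS, hβdef, pSinv_pSop, hAcurl]


/-! ### Part IV: transfer between polynomial fields and analytic fields -/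

def evalM (A : PM) : V3 → M3 := fun x => Matrix.of fun i j => MvPolynomial.eval x (A i j)

lemma pd_evalP (i : Fin 3) (p : P3) :
    pd i (fun y => MvPolynomial.eval y p) = fun x => MvPolynomial.eval x (pderiv i p) :=
  funext fun x => fderiv_eval_single p x i

lemma eval_trace (A : PM) (x : V3) :
    MvPolynomial.eval x (Matrix.trace A) = Matrix.trace (evalM A x) := by
  simp [Matrix.trace, Matrix.diag, evalM, map_sum]

lemma mcurl_evalM (A : PM) : mcurl (evalM A) = evalM (pmcurl A) := by
  funext x
  refine Matrix.ext fun i j => ?_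
  show pd (j+1) (fun y => evalM A y i (j+2)) x - pd (j+2) (fun y => evalM A y i (j+1)) x
      = MvPolynomial.eval x (pmcurl A i j)
  have e1 : (fun y => evalM A y i (j+2)) = fun y => MvPolynomial.eval y (A i (j+2)) := rfl
  have e2 : (fun y => evalM A y i (j+1)) = fun y => MvPolynomial.eval y (A i (j+1)) := rfl
  rw [e1, e2, pd_evalP, pd_evalP]
  show _ = MvPolynomial.eval x (pderiv (j+1) (A i (j+2)) - pderiv (j+2) (A i (j+1)))
  rw [map_sub]

lemma Sinv_evalM (A : PM) (x : V3) : Sinv (evalM A x) = evalM (pSinv A) x := by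
  refine Matrix.ext fun i j => ?_
  show (evalM A x)ᵀ i j - ((1/2 : ℝ) * Matrix.trace (evalM A x)) • (1 : M3) i j
      = MvPolynomial.eval x (pSinv A i j)
  have h1 : pSinv A i j
      = A j i - ((1/2 : ℝ) • Matrix.trace A) * ((1 : PM) i j) := by
    show (Aᵀ - ((1/2 : ℝ) • Matrix.trace A) • (1 : PM)) i j = _
    simp [Matrix.sub_apply, Matrix.smul_apply, Matrix.transpose_apply, smul_eq_mul]
  rw [h1, map_sub, _root_.map_mul]
  have h2 : MvPolynomial.eval x ((1/2 : ℝ) • Matrix.trace A)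
      = (1/2 : ℝ) * Matrix.trace (evalM A x) := by
    rw [MvPolynomial.smul_eq_C_mul, _root_.map_mul, MvPolynomial.eval_C, eval_trace]
  rw [h2]
  have h3 : MvPolynomial.eval x ((1 : PM) i j) = (1 : M3) i j := by
    rcases eq_or_ne i j with rfl|hne
    · simp [Matrix.one_apply]
    · simp [Matrix.one_apply, hne]
  rw [h3]
  rfl

lemma cott_evalM (A : PM) : cott (evalM A) = evalM (pcott A) := by
  have h1 : mcurl (evalM A) = evalM (pmcurl A) := mcurl_evalM A
  have h2 : (fun x => Sinv (mcurl (evalM A) x)) = evalM (pSinv (pmcurl A)) := by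
    funext x; rw [h1]; exact Sinv_evalM _ x
  have h3 : inc (evalM A) = evalM (pinc A) := by
    unfold inc
    rw [h2, mcurl_evalM]
    rfl
  have h4 : (fun x => Sinv (inc (evalM A) x)) = evalM (pSinv (pinc A)) := by
    funext x; rw [h3]; exact Sinv_evalM _ x
  unfold cott
  rw [h4, mcurl_evalM]
  rfl

lemma mdiv_evalM (A : PM) : mdiv (evalM A) = fun x i => MvPolynomial.eval x (pmdiv A i) := by
  funext x i
  show (∑ j, pd j (fun y => evalM A y i j) x) = _
  have e : ∀ j : Fin 3, pd j (fun y => evalM A y i j) x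
      = MvPolynomial.eval x (pderiv j (A i j)) := by
    intro j
    have e1 : (fun y => evalM A y i j) = fun y => MvPolynomial.eval y (A i j) := rfl
    rw [e1, pd_evalP]
  rw [Finset.sum_congr rfl (fun j _ => e j)]
  show _ = MvPolynomial.eval x (∑ j, pderiv j (A i j))
  rw [map_sum]

/-- exactness of the polynomial conformal elasticity complex at the div stage. -/

theorem poly_conformal_elasticity_exact_div (k : ℕ) (τ : V3 → M3) (hτ : PolyLeST k τ) :
    (∀ x, mdiv τ x = 0) ↔
      ∃ σ : V3 → M3, PolyLeST (k + 3) σ ∧ ∀ x, τ x = cott σ x := by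
  obtain ⟨hpoly, hsymτ, htrτ⟩ := hτ
  have hpoly' : ∀ i j, ∃ q : MvPolynomial (Fin 3) ℝ, q.totalDegree ≤ k ∧
      ∀ x, τ x i j = MvPolynomial.eval x q := hpoly
  choose p hpdeg hpeq using hpoly'
  set P : PM := Matrix.of fun i j => p i j with hPdef
  have hτeq : τ = evalM P := by
    funext x; exact Matrix.ext fun i j => hpeq i j x
  constructor
  · intro h
    have hsymP : Pᵀ = P := by
      refine Matrix.ext fun i j => ?_
      show P j i = P i j
      apply MvPolynomial.funext
      intro x
      have h1 : MvPolynomial.eval x (P j i) = τ x j i := (hpeq j i x).symm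
      have h2 : MvPolynomial.eval x (P i j) = τ x i j := (hpeq i j x).symm
      rw [h1, h2]
      have h3 := congrFun (congrFun (hsymτ x) i) j
      simpa [Matrix.transpose_apply] using h3
    have htrP : Matrix.trace P = 0 := by
      apply MvPolynomial.funext
      intro x
      have h4 : evalM P x = τ x := (congrFun hτeq x).symm
      rw [eval_trace, h4, htrτ x, map_zero]
    have hdivP : pmdiv P = 0 := by
      funext i
      apply MvPolynomial.funext
      intro x
      have h1 : mdiv τ = fun x i => MvPolynomial.eval x (pmdiv P i) := by
        rw [hτeq, mdiv_evalM]
      have h2 := congrFun (congrFun h1 x) i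
      show MvPolynomial.eval x (pmdiv P i) = MvPolynomial.eval x 0
      rw [map_zero, ← h2]
      exact congrFun (h x) i
    obtain ⟨S, hSsym, hStr, hSdeg, hScott⟩ := main_alg k P hsymP htrP hdivP hpdeg
    refine ⟨evalM S, ⟨?_, ?_, ?_⟩, ?_⟩
    · intro i j
      exact ⟨S i j, hSdeg i j, fun x => rfl⟩
    · intro x
      refine Matrix.ext fun i j => ?_
      show evalM S x j i = evalM S x i j
      have h5 : S j i = S i j := by
        conv_lhs => rw [show S j i = Sᵀ i j from rfl, hSsym]
      show MvPolynomial.eval x (S j i) = MvPolynomial.eval x (S i j)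
      rw [h5]
    · intro x
      rw [← eval_trace, hStr, map_zero]
    · intro x
      have h6 : cott (evalM S) = evalM (pcott S) := cott_evalM S
      rw [congrFun h6 x, hScott, ← hτeq]
  · rintro ⟨σ, ⟨hpolyσ, _, _⟩, heq⟩
    intro x
    have hpolyσ' : ∀ i j, ∃ q : MvPolynomial (Fin 3) ℝ, q.totalDegree ≤ k + 3 ∧
        ∀ x, σ x i j = MvPolynomial.eval x q := hpolyσ
    choose q hqdeg hqeq using hpolyσ'
    set Q : PM := Matrix.of fun i j => q i j with hQdef
    have hσeq : σ = evalM Q := by funext y; exact Matrix.ext fun i j => hqeq i j y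
    have hc : cott σ = evalM (pcott Q) := by rw [hσeq]; exact cott_evalM Q
    have hτeq2 : τ = evalM (pcott Q) := by
      funext y
      rw [heq y]
      exact congrFun hc y
    have h7 : mdiv τ = fun x i => MvPolynomial.eval x (pmdiv (pcott Q) i) := by
      rw [hτeq2, mdiv_evalM]
    rw [h7]
    funext i
    have h8 : pmdiv (pcott Q) = 0 := pmdiv_pmcurl _
    have h9 : pmdiv (pcott Q) i = 0 := congrFun h8 i
    show MvPolynomial.eval x (pmdiv (pcott Q) i) = (0 : Fin 3 → ℝ) i
    rw [h9, map_zero]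
    simp

end
end
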